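/- Let Ω₁ and Ω₂ be adapted families of connection 1-forms. Then Ω₁ and Ω₂ have the same reduced operator if and only if Ω₁ and Ω₂ are adapted gauge equivalent. -/

import Mathlib

open MvPolynomial Matrix Finset

noncomputable section

/-- `ℂ[q,h]`: variable `0` is `q`, variable `1` is `h`. -/
abbrev PQH : Type := MvPolynomial (Fin 2) ℂ

/-- weights: `deg q = 2(N-k)`, `deg h = 2`. -/
def wt (N k : ℕ) : Fin 2 → ℤ := ![2 * ((N : ℤ) - (k : ℤ)), 2]

/-- weighted-homogeneous of degree `d`. -/
def IsHom (N k : ℕ) (p : PQH) (d : ℤ) : Prop :=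
  p.IsWeightedHomogeneous (wt N k) d

/-- substitution `q = 0`. -/
def q0 : PQH →ₐ[ℂ] PQH := aeval ![0, X 1]

abbrev Mat (N : ℕ) := Matrix (Fin (N - 1)) (Fin (N - 1)) PQH

/-- the matrix `I₋₁`: entries `(i+1, i)` equal to `1`, all other entries `0`. -/
def Im1 (N : ℕ) : Mat N := fun i j => if (i : ℕ) = (j : ℕ) + 1 then 1 else 0

/-- adapted gauge transformation: entries weighted-homogeneous of degree `2(j-i)`,
and `U(0,h) = I`. -/
structure IsAdaptedGauge (N k : ℕ) (U : Mat N) : Prop where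
  homog : ∀ i j, IsHom N k (U i j) (2 * ((j : ℤ) - (i : ℤ)))
  init : U.map ⇑q0 = 1

/-- adapted family of connection 1-forms `Ω = (1/h) R dt`, as a condition on `R`:
entries weighted-homogeneous of degree `2(j-i)+2`, `R(0,h) = I₋₁`, and all
`(i+1,i)` entries equal to `1`. -/
structure IsAdaptedConn (N k : ℕ) (R : Mat N) : Prop where
  homog : ∀ i j, IsHom N k (R i j) (2 * ((j : ℤ) - (i : ℤ)) + 2)
  init : R.map ⇑q0 = Im1 N
  subdiag : ∀ i j : Fin (N - 1), (i : ℕ) = (j : ℕ) + 1 → R i j = 1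

/-- `h⁻¹`-linear: the variable `h` does not occur in the entries of `R`. -/
def IsHinvLinear (N : ℕ) (R : Mat N) : Prop :=
  ∀ i j, ∀ m ∈ (R i j).support, m 1 = 0

/-- the gauge action `U*Ω` on the level of the matrix `R`:
`R' = U⁻¹ R U + h q U⁻¹ (∂U/∂q)`. -/
def gaugeAct (N : ℕ) (U R : Mat N) : Mat N :=
  U⁻¹ * R * U + (X 1 * X 0 : PQH) • (U⁻¹ * U.map (fun p => pderiv 0 p))

/-- the derivation `D = q d/dq` of `ℂ[q,h]`, as a `ℂ`-linear endomorphism. -/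
def Dop : Module.End ℂ PQH := (LinearMap.mulLeft ℂ (X 0 : PQH)) ∘ₗ (pderiv 0).toLinearMap

/-- multiplication by a polynomial, as a differential operator. -/
def mulOp (c : PQH) : Module.End ℂ PQH := LinearMap.mulLeft ℂ c

/-- the operator `hD`. -/
def hD : Module.End ℂ PQH := mulOp (X 1) * Dop

/-- the operators attached to an adapted family `Ω = (1/h) R dt`: `P₀ = 1`,
`P_{β+1} = (hD)∘P_β − Σ_{α=0}^{β} r_{α,β}·P_α`; `Pops N R (N-1)` is the reduced
operator of `Ω`. -/
def Pops (N : ℕ) (R : Mat N) : ℕ → Module.End ℂ PQH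
  | 0 => 1
  | β + 1 =>
      hD * Pops N R β -
        ∑ α : Fin (β + 1),
          (if h : (α : ℕ) < N - 1 ∧ β < N - 1 then
            mulOp (R ⟨α, h.1⟩ ⟨β, h.2⟩) * Pops N R α
          else 0)
  termination_by β => β
  decreasing_by
  · exact Nat.lt_succ_self β
  · exact α.is_lt

/-- `σ_{β,γ}` attached to an adapted family `R`:
`σ_{0,0} = 1`, `σ_{β+1,γ} = σ_{β,γ−1} + q h ∂σ_{β,γ}/∂q − Σ_{α=γ}^{β} r_{α,β} σ_{α,γ}`,
with the conventions `σ_{β,γ} = 0` for `γ < 0` or `γ > β` (which this definition obeys). -/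
def sigmaC (N : ℕ) (R : Mat N) : ℕ → ℕ → PQH
  | 0, 0 => 1
  | 0, _ + 1 => 0
  | β + 1, γ =>
      (match γ with
        | 0 => 0
        | γ' + 1 => sigmaC N R β γ') +
      X 0 * X 1 * pderiv 0 (sigmaC N R β γ) -
      ∑ α : Fin (β + 1),
        (if h : γ ≤ (α : ℕ) ∧ (α : ℕ) < N - 1 ∧ β < N - 1 then
          R ⟨α, h.2.1⟩ ⟨β, h.2.2⟩ * sigmaC N R α γ
        else 0)
  termination_by β _ => β
  decreasing_by
  · exact Nat.lt_succ_self β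
  · exact Nat.lt_succ_self β
  · exact α.is_lt

/-- the integers `λᵢᵏ` defined by `k ∏_{j=1}^{k-1} (kX+j) = Σᵢ λᵢᵏ Xⁱ`. -/
def lam (k i : ℕ) : ℤ :=
  ((k : Polynomial ℤ) *
    ∏ j ∈ Finset.Icc 1 (k - 1),
      ((k : Polynomial ℤ) * Polynomial.X + (j : Polynomial ℤ))).coeff i

/-- the Picard–Fuchs operator
`P^{N,k} = (hD)^{N−1} − q (λ_{k−1}(hD)^{k−1} + λ_{k−2} h (hD)^{k−2} + ⋯ + λ₀ h^{k−1})`. -/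
def PNK (N k : ℕ) : Module.End ℂ PQH :=
  hD ^ (N - 1) -
    ∑ i ∈ Finset.range k,
      mulOp (C ((lam k i : ℤ) : ℂ) * X 0 * X 1 ^ (k - 1 - i)) * hD ^ i

lemma wt_pos {N k : ℕ} (hNk : k < N) : ∀ i, 0 < wt N k i := by
  intro i
  fin_cases i <;> simp [wt]
  omega

lemma weight_wt_nonneg {N k : ℕ} (hNk : k < N) (m : Fin 2 →₀ ℕ) :
    0 ≤ (Finsupp.weight (wt N k)) m := by
  rw [Finsupp.weight_apply, Finsupp.sum]
  refine Finset.sum_nonneg fun i _ => ?_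
  exact nsmul_nonneg (le_of_lt (wt_pos hNk i)) _

lemma IsHom.eq_zero_of_neg {N k : ℕ} (hNk : k < N) {p : PQH} {d : ℤ}
    (hp : IsHom N k p d) (hd : d < 0) : p = 0 := by
  ext m
  rw [coeff_zero]
  by_contra h
  have := hp h
  have := weight_wt_nonneg hNk m
  omega

lemma IsHom.exists_C {N k : ℕ} (hNk : k < N) {p : PQH}
    (hp : IsHom N k p 0) : ∃ c : ℂ, p = C c := by
  refine ⟨constantCoeff p, ?_⟩
  ext m
  rcases eq_or_ne m 0 with rfl | hm
  · simp [coeff_C, constantCoeff_eq]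
  · rw [coeff_C, if_neg (Ne.symm hm)]
    by_contra h
    have hw := hp h
    rw [Finsupp.weight_apply, Finsupp.sum] at hw
    have : ∀ i ∈ m.support, (0:ℤ) < m i • wt N k i := by
      intro i hi
      have hmi : 0 < m i := Nat.pos_of_ne_zero (Finsupp.mem_support_iff.mp hi)
      have := wt_pos hNk i
      positivity
    rcases Finsupp.support_nonempty_iff.mpr hm with ⟨⟩
    have hne : m.support.Nonempty := Finsupp.support_nonempty_iff.mpr hm
    have : (0:ℤ) < ∑ i ∈ m.support, m i • wt N k i :=
      Finset.sum_pos this hne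
    omega
lemma q0_X0 : q0 (X 0) = 0 := by simp [q0]
lemma q0_X1 : q0 (X 1) = X 1 := by simp [q0]
lemma q0_C (c : ℂ) : q0 (C c) = C c := by
  simp [q0, algHom_C]

lemma X0_mul_pderiv_monomial (s : Fin 2 →₀ ℕ) (a : ℂ) :
    X 0 * pderiv 0 (monomial s a) = (s 0 : ℂ) • monomial s a := by
  rw [pderiv_monomial]
  rcases Nat.eq_zero_or_pos (s 0) with h0 | h0
  · simp [h0]
  · have hs : (Finsupp.single (0:Fin 2) 1) + (s - Finsupp.single 0 1) = s := by
      ext i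
      simp only [Finsupp.add_apply, Finsupp.tsub_apply, Finsupp.single_apply]
      rcases eq_or_ne ((0:Fin 2)) i with rfl | hi
      · simp; omega
      · simp [hi]
    rw [X, monomial_mul, one_mul, hs, smul_monomial, smul_eq_mul, mul_comm]
lemma IsHom.X0_pderiv {N k : ℕ} {p : PQH} {d : ℤ} (hp : IsHom N k p d) :
    IsHom N k (X 0 * pderiv 0 p) d := by
  conv_lhs => rw [← support_sum_monomial_coeff p]
  rw [map_sum, Finset.mul_sum]
  refine IsWeightedHomogeneous.sum _ _ _ fun s hs => ?_
  rw [X0_mul_pderiv_monomial]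
  have hsm : IsWeightedHomogeneous (wt N k) (monomial s (coeff s p)) d :=
    isWeightedHomogeneous_monomial _ _ _ (hp (Finsupp.mem_support_iff.mp hs))
  simpa using ((weightedHomogeneousSubmodule ℂ (wt N k) d).smul_mem
    ((s 0 : ℂ)) ((mem_weightedHomogeneousSubmodule _ _ _ _).2 hsm))

lemma IsHom.qh_pderiv {N k : ℕ} {p : PQH} {d : ℤ} (hp : IsHom N k p d) :
    IsHom N k (X 0 * X 1 * pderiv 0 p) (d + 2) := by
  have h1 : IsHom N k (X 1) 2 := by
    have := isWeightedHomogeneous_X ℂ (wt N k) 1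
    simpa [IsHom, wt] using this
  have := h1.mul hp.X0_pderiv
  have h2 : X 1 * (X 0 * pderiv 0 p) = X 0 * X 1 * pderiv 0 p := by ring
  rw [h2] at this
  simpa [IsHom, add_comm] using this
lemma IsHom.sub {N k : ℕ} {p q : PQH} {d : ℤ} (hp : IsHom N k p d) (hq : IsHom N k q d) :
    IsHom N k (p - q) d := by
  have := Submodule.sub_mem (weightedHomogeneousSubmodule ℂ (wt N k) d)
    ((mem_weightedHomogeneousSubmodule _ _ _ _).2 hp)
    ((mem_weightedHomogeneousSubmodule _ _ _ _).2 hq)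
  exact (mem_weightedHomogeneousSubmodule _ _ _ _).1 this

lemma IsHom.cast {N k : ℕ} {p : PQH} {d d' : ℤ} (hp : IsHom N k p d) (h : d = d') :
    IsHom N k p d' := h ▸ hp

lemma sigmaC_zero_lt {N : ℕ} {R : Mat N} : ∀ {β γ : ℕ}, β < γ → sigmaC N R β γ = 0 := by
  intro β
  induction β with
  | zero =>
    intro γ hγ
    obtain ⟨γ', rfl⟩ : ∃ γ', γ = γ' + 1 := ⟨γ - 1, by omega⟩
    rw [sigmaC]
  | succ β ih =>
    intro γ hγ
    obtain ⟨γ', rfl⟩ : ∃ γ'', γ = γ'' + 1 := ⟨γ - 1, by omega⟩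
    rw [sigmaC, ih (by omega), ih (by omega), map_zero, mul_zero]
    rw [Finset.sum_eq_zero, add_zero, sub_zero]
    intro α _
    rw [dif_neg]
    rintro ⟨h1, -⟩
    have := α.isLt
    omega

lemma sigmaC_diag {N : ℕ} {R : Mat N} : ∀ β : ℕ, sigmaC N R β β = 1 := by
  intro β
  induction β with
  | zero => rw [sigmaC]
  | succ β ih =>
    rw [sigmaC, ih, sigmaC_zero_lt (by omega), map_zero, mul_zero]
    rw [Finset.sum_eq_zero, add_zero, sub_zero]
    intro α _
    rw [dif_neg]
    rintro ⟨h1, -⟩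
    have := α.isLt
    omega

lemma q0_sigmaC {N : ℕ} {R : Mat N} (hR : R.map ⇑q0 = Im1 N) :
    ∀ β γ : ℕ, q0 (sigmaC N R β γ) = if β = γ then 1 else 0 := by
  have hR' : ∀ i j : Fin (N-1), q0 (R i j) = if (i:ℕ) = (j:ℕ) + 1 then 1 else 0 := by
    intro i j
    have := congrFun (congrFun hR i) j
    simpa [Matrix.map_apply, Im1] using this
  intro β
  induction β with
  | zero =>
    rintro (_ | γ)
    · rw [sigmaC]; simp
    · rw [sigmaC]; simp
  | succ β ih =>
    have hsum : ∀ γ : ℕ, q0 (∑ α : Fin (β + 1),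
        (if h : γ ≤ (α : ℕ) ∧ (α : ℕ) < N - 1 ∧ β < N - 1 then
          R ⟨α, h.2.1⟩ ⟨β, h.2.2⟩ * sigmaC N R α γ
        else 0)) = 0 := by
      intro γ
      rw [map_sum, Finset.sum_eq_zero]
      intro α _
      split
      · rename_i h
        rw [_root_.map_mul, hR']
        rw [if_neg, zero_mul]
        have := α.isLt
        simp only []
        omega
      · simp
    rintro (_ | γ)
    · rw [sigmaC, map_sub, map_add, _root_.map_mul, _root_.map_mul, q0_X0, map_zero, hsum]
      simp [Nat.succ_ne_zero]
    · rw [sigmaC, map_sub, map_add, _root_.map_mul, _root_.map_mul, q0_X0, ih, hsum]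
      simp [Nat.succ_eq_add_one]

lemma isHom_sigmaC {N k : ℕ} {R : Mat N}
    (hR : ∀ i j, IsHom N k (R i j) (2 * ((j : ℤ) - (i : ℤ)) + 2)) :
    ∀ β γ : ℕ, IsHom N k (sigmaC N R β γ) (2 * (β:ℤ) - 2 * (γ:ℤ)) := by
  intro β
  induction β using Nat.strong_induction_on with
  | _ β ih =>
    match β with
    | 0 =>
      rintro (_ | γ)
      · rw [sigmaC]; simpa [IsHom] using isWeightedHomogeneous_one ℂ (wt N k)
      · rw [sigmaC]; exact isWeightedHomogeneous_zero ℂ _ _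
    | β + 1 =>
      have ihβ := ih β (by omega)
      have hsum : ∀ γ : ℕ, IsHom N k (∑ α : Fin (β + 1),
          (if h : γ ≤ (α : ℕ) ∧ (α : ℕ) < N - 1 ∧ β < N - 1 then
            R ⟨α, h.2.1⟩ ⟨β, h.2.2⟩ * sigmaC N R α γ
          else 0)) (2 * ((β:ℤ)+1) - 2 * (γ:ℤ)) := by
        intro γ
        refine IsWeightedHomogeneous.sum _ _ _ fun α _ => ?_
        split
        · rename_i h
          refine IsHom.cast ((hR _ _).mul (ih α (by omega) γ)) ?_
          push_cast
          ring
        · exact isWeightedHomogeneous_zero ℂ _ _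
      rintro (_ | γ)
      · rw [sigmaC]
        refine IsHom.sub ?_ ((hsum 0).cast (by push_cast; ring))
        refine IsHom.cast (IsWeightedHomogeneous.add (isWeightedHomogeneous_zero ℂ _ _) ((ihβ 0).qh_pderiv)) ?_
        push_cast; ring
      · rw [sigmaC]
        refine IsHom.sub ?_ ((hsum (γ+1)).cast (by push_cast; ring))
        refine IsHom.cast (IsWeightedHomogeneous.add ((ihβ γ).cast ?_) (((ihβ (γ+1)).qh_pderiv).cast ?_)) rfl
        all_goals push_cast; ring
lemma mulOp_apply (a f : PQH) : mulOp a f = a * f := rfl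
lemma mulOp_one : mulOp 1 = 1 := by
  refine LinearMap.ext fun f => ?_
  rw [mulOp_apply, one_mul]; rfl
lemma mulOp_zero : mulOp 0 = 0 := by
  refine LinearMap.ext fun f => ?_
  rw [mulOp_apply, zero_mul]; rfl
lemma mulOp_mul (a b : PQH) : mulOp (a * b) = mulOp a * mulOp b := by
  refine LinearMap.ext fun f => ?_
  rw [Module.End.mul_apply, mulOp_apply, mulOp_apply, mulOp_apply, mul_assoc]
lemma mulOp_add (a b : PQH) : mulOp (a + b) = mulOp a + mulOp b := by
  refine LinearMap.ext fun f => ?_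
  rw [LinearMap.add_apply, mulOp_apply, mulOp_apply, mulOp_apply, add_mul]
lemma mulOp_sub (a b : PQH) : mulOp (a - b) = mulOp a - mulOp b := by
  refine LinearMap.ext fun f => ?_
  rw [LinearMap.sub_apply, mulOp_apply, mulOp_apply, mulOp_apply, sub_mul]
lemma mulOp_sum {ι : Type*} (s : Finset ι) (f : ι → PQH) :
    mulOp (∑ i ∈ s, f i) = ∑ i ∈ s, mulOp (f i) := by
  refine LinearMap.ext fun g => ?_
  rw [LinearMap.sum_apply, mulOp_apply, Finset.sum_mul]
  exact Finset.sum_congr rfl fun i _ => rfl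

lemma hD_apply (f : PQH) : hD f = X 1 * (X 0 * pderiv 0 f) := rfl

lemma hD_mulOp (c : PQH) :
    hD * mulOp c = mulOp (X 0 * X 1 * pderiv 0 c) + mulOp c * hD := by
  refine LinearMap.ext fun f => ?_
  rw [Module.End.mul_apply, LinearMap.add_apply, Module.End.mul_apply,
    mulOp_apply, mulOp_apply, mulOp_apply, hD_apply, hD_apply, pderiv_mul]
  ring

lemma pops_eq {N : ℕ} (R : Mat N) :
    ∀ β : ℕ, β ≤ N - 1 →
      Pops N R β = ∑ γ ∈ Finset.range (β+1), mulOp (sigmaC N R β γ) * hD ^ γ := by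
  intro β
  induction β using Nat.strong_induction_on with
  | _ β ih =>
    match β with
    | 0 =>
      intro _
      rw [Pops]
      simp [sigmaC, mulOp_one]
    | β + 1 =>
      intro hβ
      have hβ' : β < N - 1 := by omega
      have hα' : ∀ α : Fin (β+1), (α:ℕ) < N - 1 := fun α => by have := α.isLt; omega
      -- the three families
      set Ader : ℕ → Module.End ℂ PQH :=
        fun γ => mulOp (X 0 * X 1 * pderiv 0 (sigmaC N R β γ)) * hD ^ γ with hAder
      set Ashift : ℕ → Module.End ℂ PQH :=
        fun γ => mulOp (match γ with | 0 => (0:PQH) | γ'+1 => sigmaC N R β γ') * hD ^ γ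
          with hAshift
      set Asum : ℕ → Module.End ℂ PQH :=
        fun γ => ∑ α : Fin (β + 1),
          mulOp (R ⟨α, hα' α⟩ ⟨β, hβ'⟩ * sigmaC N R α γ) * hD ^ γ with hAsum
      have step1 : hD * Pops N R β =
          (∑ γ ∈ Finset.range (β+1), Ader γ) +
          ∑ γ ∈ Finset.range (β+1), mulOp (sigmaC N R β γ) * hD ^ (γ+1) := by
        rw [ih β (by omega) (by omega), Finset.mul_sum, ← Finset.sum_add_distrib]
        refine Finset.sum_congr rfl fun γ _ => ?_
        rw [← mul_assoc, hD_mulOp, add_mul, mul_assoc (mulOp (sigmaC N R β γ)), ← pow_succ']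
      have step2 : (∑ γ ∈ Finset.range (β+1), Ader γ) = ∑ γ ∈ Finset.range (β+2), Ader γ := by
        rw [Finset.sum_range_succ (f := Ader) (n := β+1)]
        have : Ader (β+1) = 0 := by
          rw [hAder]
          simp only [sigmaC_zero_lt (Nat.lt_succ_self β), map_zero, mul_zero, mulOp_zero,
            zero_mul]
        rw [this, add_zero]
      have step3 : (∑ γ ∈ Finset.range (β+1), mulOp (sigmaC N R β γ) * hD ^ (γ+1)) =
          ∑ γ ∈ Finset.range (β+2), Ashift γ := by
        rw [Finset.sum_range_succ' Ashift (β+1)]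
        have h0 : Ashift 0 = 0 := by rw [hAshift]; simp [mulOp_zero]
        rw [h0, add_zero]
      have step4 : (∑ α : Fin (β + 1),
          (if h : (α : ℕ) < N - 1 ∧ β < N - 1 then
            mulOp (R ⟨α, h.1⟩ ⟨β, h.2⟩) * Pops N R α
          else 0)) = ∑ γ ∈ Finset.range (β+2), Asum γ := by
        have : ∀ α : Fin (β+1), (if h : (α : ℕ) < N - 1 ∧ β < N - 1 then
            mulOp (R ⟨α, h.1⟩ ⟨β, h.2⟩) * Pops N R α else 0) =
            ∑ γ ∈ Finset.range (β+2), mulOp (R ⟨α, hα' α⟩ ⟨β, hβ'⟩ * sigmaC N R α γ) * hD ^ γ := by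
          intro α
          rw [dif_pos ⟨hα' α, hβ'⟩, ih α (by omega) (by omega), Finset.mul_sum]
          have hext : ∀ γ ∈ Finset.range (β+2), γ ∉ Finset.range ((α:ℕ)+1) →
              mulOp (R ⟨α, hα' α⟩ ⟨β, hβ'⟩ * sigmaC N R α γ) * hD ^ γ = 0 := by
            intro γ _ hγ
            rw [Finset.mem_range, not_lt] at hγ
            rw [sigmaC_zero_lt (by omega), mul_zero, mulOp_zero, zero_mul]
          rw [← Finset.sum_subset (Finset.range_subset_range.mpr (by omega : (α:ℕ)+1 ≤ β+2)) hext]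
          refine Finset.sum_congr rfl fun γ _ => ?_
          rw [mulOp_mul, mul_assoc]
        rw [Finset.sum_congr rfl (fun α _ => this α), Finset.sum_comm]
      have step5 : ∀ γ, mulOp (sigmaC N R (β+1) γ) * hD ^ γ = Ashift γ + Ader γ - Asum γ := by
        intro γ
        have hσ : sigmaC N R (β+1) γ =
            (match γ with | 0 => (0:PQH) | γ'+1 => sigmaC N R β γ') +
            X 0 * X 1 * pderiv 0 (sigmaC N R β γ) -
            ∑ α : Fin (β + 1),
              (if h : γ ≤ (α : ℕ) ∧ (α : ℕ) < N - 1 ∧ β < N - 1 then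
                R ⟨α, h.2.1⟩ ⟨β, h.2.2⟩ * sigmaC N R α γ
              else 0) := by
          match γ with
          | 0 => rw [sigmaC]
          | γ'+1 => rw [sigmaC]
        rw [hσ, mulOp_sub, mulOp_add, sub_mul, add_mul, mulOp_sum, Finset.sum_mul]
        congr 1
        rw [hAsum]
        refine Finset.sum_congr rfl fun α _ => ?_
        by_cases hc : γ ≤ (α:ℕ)
        · rw [dif_pos ⟨hc, hα' α, hβ'⟩]
        · rw [dif_neg (by tauto), mulOp_zero, zero_mul,
            sigmaC_zero_lt (by omega), mul_zero, mulOp_zero, zero_mul]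
      rw [Pops, step1, step2, step3, step4, Finset.sum_congr rfl (fun γ _ => step5 γ),
        Finset.sum_sub_distrib, Finset.sum_add_distrib, add_comm
          (∑ γ ∈ Finset.range (β+2), Ashift γ)]
lemma X0_mul_pderiv_X0_pow (n : ℕ) :
    X 0 * pderiv 0 ((X 0 : PQH) ^ n) = (n : ℂ) • (X 0 : PQH) ^ n := by
  rw [X_pow_eq_monomial, X0_mul_pderiv_monomial]
  simp

lemma hD_pow_X0_pow (γ n : ℕ) :
    (hD ^ γ) ((X 0 : PQH) ^ n) = C ((n : ℂ) ^ γ) * X 1 ^ γ * X 0 ^ n := by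
  induction γ with
  | zero => simp [Module.End.one_apply]
  | succ γ ihγ =>
    rw [pow_succ', Module.End.mul_apply, ihγ, hD_apply]
    have h1 : pderiv 0 (C ((n:ℂ) ^ γ) * X 1 ^ γ * (X 0 : PQH) ^ n) =
        (C ((n:ℂ) ^ γ) * X 1 ^ γ) * pderiv 0 ((X 0 : PQH) ^ n) := by
      rw [pderiv_mul, pderiv_mul]
      have hX1 : pderiv 0 ((X 1 : PQH) ^ γ) = 0 := by
        have := Derivation.leibniz_pow (pderiv (R := ℂ) 0) (a := (X 1 : PQH)) (n := γ)
        rw [this, pderiv_X]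
        simp
      simp [hX1]
    rw [h1]
    have h2 : (X 1 : PQH) * (X 0 * (C ((n:ℂ) ^ γ) * X 1 ^ γ * pderiv 0 ((X 0:PQH) ^ n))) =
        (C ((n:ℂ) ^ γ) * X 1 ^ (γ+1)) * (X 0 * pderiv 0 ((X 0:PQH) ^ n)) := by ring
    rw [h2, X0_mul_pderiv_X0_pow, smul_eq_C_mul]
    rw [show ((n:ℂ)) ^ (γ+1) = (n:ℂ)^γ * (n:ℂ) by ring]
    rw [C_mul]
    ring

lemma opsum_injective {M : ℕ} (c : ℕ → PQH)
    (h : (∑ γ ∈ Finset.range M, mulOp (c γ) * hD ^ γ) = 0) : ∀ γ < M, c γ = 0 := by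
  -- evaluate on powers of X 0
  have hev : ∀ n : ℕ, ∑ γ ∈ Finset.range M, (c γ * X 1 ^ γ) * C ((n:ℂ)^γ) = 0 := by
    intro n
    have := congrArg (fun (T : Module.End ℂ PQH) => T ((X 0 : PQH) ^ n)) h
    simp only [LinearMap.zero_apply] at this
    rw [LinearMap.sum_apply] at this
    have heach : ∀ γ ∈ Finset.range M,
        (mulOp (c γ) * hD ^ γ) ((X 0 : PQH)^n) =
          ((c γ * X 1 ^ γ) * C ((n:ℂ)^γ)) * X 0 ^ n := by
      intro γ _
      rw [Module.End.mul_apply, hD_pow_X0_pow, mulOp_apply]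
      ring
    rw [Finset.sum_congr rfl heach, ← Finset.sum_mul] at this
    rcases mul_eq_zero.mp this with h' | h'
    · exact h'
    · exact absurd h' (pow_ne_zero _ (X_ne_zero _))
  -- turn into a polynomial identity
  set Q : Polynomial PQH :=
    ∑ γ ∈ Finset.range M, Polynomial.C (c γ * X 1 ^ γ) * Polynomial.X ^ γ with hQ
  have hroot : ∀ n : ℕ, Q.eval ((n : PQH)) = 0 := by
    intro n
    rw [hQ, Polynomial.eval_finset_sum]
    have : ∀ γ ∈ Finset.range M,
        (Polynomial.C (c γ * X 1 ^ γ) * Polynomial.X ^ γ).eval ((n:PQH)) =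
          (c γ * X 1 ^ γ) * C ((n:ℂ)^γ) := by
      intro γ _
      rw [Polynomial.eval_mul, Polynomial.eval_C, Polynomial.eval_pow, Polynomial.eval_X]
      congr 1
      rw [map_pow]
      norm_cast
      simp
    rw [Finset.sum_congr rfl this]
    exact hev n
  have hQ0 : Q = 0 := by
    refine Polynomial.eq_zero_of_infinite_isRoot Q ?_
    have hsub : Set.range ((↑·) : ℕ → PQH) ⊆ {x | Q.IsRoot x} := by
      rintro x ⟨n, rfl⟩
      exact hroot n
    exact Set.Infinite.mono hsub (Set.infinite_range_of_injective Nat.cast_injective)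
  intro γ hγ
  have hc : Q.coeff γ = c γ * X 1 ^ γ := by
    rw [hQ, Polynomial.finset_sum_coeff]
    rw [Finset.sum_eq_single γ]
    · rw [Polynomial.coeff_C_mul, Polynomial.coeff_X_pow, if_pos rfl, mul_one]
    · intro b _ hb
      rw [Polynomial.coeff_C_mul, Polynomial.coeff_X_pow, if_neg (fun hh => hb hh.symm), mul_zero]
    · intro hh
      exact absurd (Finset.mem_range.mpr hγ) hh
  rw [hQ0] at hc
  simp only [Polynomial.coeff_zero] at hc
  rcases mul_eq_zero.mp hc.symm with h' | h'
  · exact h'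
  · exact absurd h' (pow_ne_zero _ (X_ne_zero _))

lemma sigma_top_eq {N : ℕ} (R₁ R₂ : Mat N)
    (h : Pops N R₁ (N-1) = Pops N R₂ (N-1)) :
    ∀ γ : ℕ, sigmaC N R₁ (N-1) γ = sigmaC N R₂ (N-1) γ := by
  intro γ
  by_cases hγ : γ < (N-1)+1
  · rw [pops_eq R₁ (N-1) le_rfl, pops_eq R₂ (N-1) le_rfl] at h
    have h0 : (∑ γ ∈ Finset.range ((N-1)+1),
        mulOp (sigmaC N R₁ (N-1) γ - sigmaC N R₂ (N-1) γ) * hD ^ γ) = 0 := by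
      rw [Finset.sum_congr rfl (fun γ _ => by rw [mulOp_sub, sub_mul]),
        Finset.sum_sub_distrib, h, sub_self]
    have := opsum_injective _ h0 γ hγ
    exact sub_eq_zero.mp this
  · rw [sigmaC_zero_lt (by omega), sigmaC_zero_lt (by omega)]
/-- entries of a matrix extended to ℕ indices by zero. -/
def entE {N : ℕ} (A : Mat N) : ℕ → ℕ → PQH :=
  fun a b => if h : a < N-1 ∧ b < N-1 then A ⟨a, h.1⟩ ⟨b, h.2⟩ else 0

lemma entE_eq {N : ℕ} (A : Mat N) {a b : ℕ} (ha : a < N-1) (hb : b < N-1) :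
    entE A a b = A ⟨a, ha⟩ ⟨b, hb⟩ := dif_pos ⟨ha, hb⟩

lemma entE_fin {N : ℕ} (A : Mat N) (i j : Fin (N-1)) :
    entE A (i:ℕ) (j:ℕ) = A i j := by
  rw [entE_eq A i.isLt j.isLt]

lemma conn_entE_zero {N k : ℕ} {R : Mat N} (hR : IsAdaptedConn N k R) (hNk : k < N)
    {a b : ℕ} (hab : b + 1 < a) : entE R a b = 0 := by
  unfold entE
  split
  · rename_i h
    refine IsHom.eq_zero_of_neg hNk (hR.homog _ _) ?_
    have h1 : ((b:ℤ)) + 1 < (a:ℤ) := by exact_mod_cast hab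
    simp only []
    omega
  · rfl

lemma conn_entE_subdiag {N k : ℕ} {R : Mat N} (hR : IsAdaptedConn N k R)
    {b : ℕ} (hb : b + 1 < N - 1) : entE R (b+1) b = 1 := by
  rw [entE_eq R hb (by omega)]
  exact hR.subdiag _ _ rfl

/-- the shift `σ_{β, γ-1}` (zero for `γ = 0`). -/
def shiftS (N : ℕ) (R : Mat N) (a : ℕ) : ℕ → PQH
  | 0 => 0
  | γ'+1 => sigmaC N R a γ'

lemma shiftS_zero {N : ℕ} (R : Mat N) (a : ℕ) : shiftS N R a 0 = 0 := rfl
lemma shiftS_succ {N : ℕ} (R : Mat N) (a γ : ℕ) : shiftS N R a (γ+1) = sigmaC N R a γ := rfl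

/-- the recursion for `sigmaC` with the sum written over `Finset.range (β+1)`. -/
lemma sig_rec {N : ℕ} (R : Mat N) {β : ℕ} (hβ : β < N - 1) (γ : ℕ) :
    sigmaC N R (β+1) γ =
      shiftS N R β γ +
      X 0 * X 1 * pderiv 0 (sigmaC N R β γ) -
      ∑ a ∈ Finset.range (β+1), entE R a β * sigmaC N R a γ := by
  have hterm : ∀ α : Fin (β+1),
      (if h : γ ≤ (α : ℕ) ∧ (α : ℕ) < N - 1 ∧ β < N - 1 then
        R ⟨α, h.2.1⟩ ⟨β, h.2.2⟩ * sigmaC N R α γ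
      else 0) = entE R (α:ℕ) β * sigmaC N R (α:ℕ) γ := by
    intro α
    have ha' : (α:ℕ) < N - 1 := by have := α.isLt; omega
    by_cases hc : γ ≤ (α:ℕ)
    · rw [dif_pos ⟨hc, ha', hβ⟩, entE_eq R ha' hβ]
    · rw [dif_neg (by tauto), sigmaC_zero_lt (by omega), mul_zero]
  have hsum : (∑ α : Fin (β+1),
      (if h : γ ≤ (α : ℕ) ∧ (α : ℕ) < N - 1 ∧ β < N - 1 then
        R ⟨α, h.2.1⟩ ⟨β, h.2.2⟩ * sigmaC N R α γ
      else 0)) = ∑ a ∈ Finset.range (β+1), entE R a β * sigmaC N R a γ := by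
    rw [Finset.sum_congr rfl (fun α _ => hterm α),
      Fin.sum_univ_eq_sum_range (fun a => entE R a β * sigmaC N R a γ) (β+1)]
  cases γ with
  | zero => rw [sigmaC, hsum, shiftS_zero]
  | succ γ' => rw [sigmaC, hsum, shiftS_succ]
/-- the rearranged recursion: shift plus derivative equals the full-range sum plus top term. -/
lemma key1 {N k : ℕ} {R : Mat N} (hR : IsAdaptedConn N k R) (hNk : k < N)
    {α : ℕ} (hα : α < N - 1) (γ : ℕ) :
    shiftS N R α γ + X 0 * X 1 * pderiv 0 (sigmaC N R α γ) =
    (∑ a ∈ Finset.range (N-1), entE R a α * sigmaC N R a γ) +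
      (if α = N - 2 then sigmaC N R (N-1) γ else 0) := by
  have hrec := sig_rec R hα γ
  have hsplit : (∑ a ∈ Finset.range (N-1), entE R a α * sigmaC N R a γ) =
      (∑ a ∈ Finset.range (α+1), entE R a α * sigmaC N R a γ) +
      ∑ a ∈ Finset.Ico (α+1) (N-1), entE R a α * sigmaC N R a γ := by
    rw [Finset.range_eq_Ico, ← Finset.sum_Ico_consecutive _ (by omega : 0 ≤ α+1) (by omega : α+1 ≤ N-1)]
    try rw [Finset.range_eq_Ico]
  have hico : (∑ a ∈ Finset.Ico (α+1) (N-1), entE R a α * sigmaC N R a γ) =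
      if α = N - 2 then 0 else sigmaC N R (α+1) γ := by
    by_cases hc : α = N - 2
    · rw [if_pos hc]
      refine Finset.sum_eq_zero fun a ha => ?_
      rw [Finset.mem_Ico] at ha
      omega
    · rw [if_neg hc]
      have hmem : α + 1 ∈ Finset.Ico (α+1) (N-1) := by
        rw [Finset.mem_Ico]; omega
      rw [Finset.sum_eq_single_of_mem (α+1) hmem]
      · rw [conn_entE_subdiag hR (by omega), one_mul]
      · intro a ha hne
        rw [Finset.mem_Ico] at ha
        rw [conn_entE_zero hR hNk (by omega), zero_mul]
  by_cases hc : α = N - 2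
  · have hNR : sigmaC N R (N-1) γ = sigmaC N R (α+1) γ := by
      rw [show N - 1 = α + 1 by omega]
    rw [if_pos hc] at hico
    rw [if_pos hc]
    linear_combination -hrec - hsplit - hico - hNR
  · rw [if_neg hc] at hico
    rw [if_neg hc]
    linear_combination -hrec - hsplit - hico
lemma entE_zero_right {N : ℕ} (A : Mat N) {a b : ℕ} (hb : N - 1 ≤ b) : entE A a b = 0 := by
  unfold entE
  rw [dif_neg]
  rintro ⟨-, h⟩
  omega

lemma entE_zero_left {N : ℕ} (A : Mat N) {a b : ℕ} (ha : N - 1 ≤ a) : entE A a b = 0 := by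
  unfold entE
  rw [dif_neg]
  rintro ⟨h, -⟩
  omega

lemma key2 {N k : ℕ} {R₁ R₂ : Mat N} (h₁ : IsAdaptedConn N k R₁) (h₂ : IsAdaptedConn N k R₂)
    (hNk : k < N) (hN2 : 1 ≤ N - 1) (U : Mat N) {β : ℕ} (hβ : β < N - 1)
    (hE : ∀ δ ≤ β, ∀ γ : ℕ, sigmaC N R₂ δ γ =
      ∑ a ∈ Finset.range (N-1), entE U a δ * sigmaC N R₁ a γ)
    (γ : ℕ) :
    sigmaC N R₂ (β+1) γ =
      (∑ e ∈ Finset.range (N-1),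
        (X 0 * X 1 * pderiv 0 (entE U e β)
          + (∑ a ∈ Finset.range (N-1), entE R₁ e a * entE U a β)
          - (∑ d ∈ Finset.range (N-1), entE U e d * entE R₂ d β)
          + entE U e (β+1)) * sigmaC N R₁ e γ)
      + entE U (N-2) β * sigmaC N R₁ (N-1) γ := by
  have hEβ := hE β le_rfl
  -- step A : the shift term
  have hA : shiftS N R₂ β γ =
      ∑ e ∈ Finset.range (N-1), entE U e β * shiftS N R₁ e γ := by
    cases γ with
    | zero =>
      rw [shiftS_zero, Finset.sum_eq_zero]
      intro e _
      rw [shiftS_zero, mul_zero]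
    | succ γ' =>
      rw [shiftS_succ]
      rw [Finset.sum_congr rfl (fun e (_ : e ∈ Finset.range (N-1)) => by rw [shiftS_succ])]
      exact hEβ γ'
  -- step B : the derivative term
  have hB : X 0 * X 1 * pderiv 0 (sigmaC N R₂ β γ) =
      (∑ e ∈ Finset.range (N-1), (X 0 * X 1 * pderiv 0 (entE U e β)) * sigmaC N R₁ e γ)
      + ∑ e ∈ Finset.range (N-1), entE U e β * (X 0 * X 1 * pderiv 0 (sigmaC N R₁ e γ)) := by
    rw [hEβ γ, map_sum, Finset.mul_sum, ← Finset.sum_add_distrib]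
    refine Finset.sum_congr rfl fun e _ => ?_
    rw [pderiv_mul]
    ring
  -- step AB : shift + derivative, using key1
  have hAB : shiftS N R₂ β γ +
      X 0 * X 1 * pderiv 0 (sigmaC N R₂ β γ) =
      (∑ e ∈ Finset.range (N-1), (X 0 * X 1 * pderiv 0 (entE U e β)) * sigmaC N R₁ e γ)
      + (∑ e ∈ Finset.range (N-1),
          (∑ a ∈ Finset.range (N-1), entE R₁ e a * entE U a β) * sigmaC N R₁ e γ)
      + entE U (N-2) β * sigmaC N R₁ (N-1) γ := by
    rw [hA, hB]
    have hmerge : (∑ e ∈ Finset.range (N-1), entE U e β * shiftS N R₁ e γ) +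
        (∑ e ∈ Finset.range (N-1), entE U e β * (X 0 * X 1 * pderiv 0 (sigmaC N R₁ e γ))) =
        ∑ e ∈ Finset.range (N-1), entE U e β *
          ((∑ a ∈ Finset.range (N-1), entE R₁ a e * sigmaC N R₁ a γ)
            + (if e = N - 2 then sigmaC N R₁ (N-1) γ else 0)) := by
      rw [← Finset.sum_add_distrib]
      refine Finset.sum_congr rfl fun e he => ?_
      rw [Finset.mem_range] at he
      rw [← mul_add, key1 h₁ hNk he γ]
    have hsplit2 : ∑ e ∈ Finset.range (N-1), entE U e β *
          ((∑ a ∈ Finset.range (N-1), entE R₁ a e * sigmaC N R₁ a γ)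
            + (if e = N - 2 then sigmaC N R₁ (N-1) γ else 0)) =
        (∑ e ∈ Finset.range (N-1), entE U e β *
          (∑ a ∈ Finset.range (N-1), entE R₁ a e * sigmaC N R₁ a γ))
        + entE U (N-2) β * sigmaC N R₁ (N-1) γ := by
      rw [Finset.sum_congr rfl (fun e (_ : e ∈ Finset.range (N-1)) => mul_add _ _ _),
        Finset.sum_add_distrib]
      congr 1
      rw [Finset.sum_eq_single_of_mem (N-2) (Finset.mem_range.mpr (by omega))]
      · rw [if_pos rfl]
      · intro e _ hne
        rw [if_neg hne, mul_zero]
    have hswap : (∑ e ∈ Finset.range (N-1), entE U e β *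
          (∑ a ∈ Finset.range (N-1), entE R₁ a e * sigmaC N R₁ a γ)) =
        ∑ e ∈ Finset.range (N-1),
          (∑ a ∈ Finset.range (N-1), entE R₁ e a * entE U a β) * sigmaC N R₁ e γ := by
      rw [Finset.sum_congr rfl (fun e (_ : e ∈ Finset.range (N-1)) => Finset.mul_sum _ _ _),
        Finset.sum_comm]
      refine Finset.sum_congr rfl fun a _ => ?_
      rw [Finset.sum_mul]
      refine Finset.sum_congr rfl fun e _ => ?_
      ring
    calc _ = (∑ e ∈ Finset.range (N-1), entE U e β * shiftS N R₁ e γ) +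
          (∑ e ∈ Finset.range (N-1), entE U e β * (X 0 * X 1 * pderiv 0 (sigmaC N R₁ e γ)))
          + ((∑ e ∈ Finset.range (N-1), (X 0 * X 1 * pderiv 0 (entE U e β)) * sigmaC N R₁ e γ))
            := by ring
      _ = _ := by rw [hmerge, hsplit2, hswap]; ring
  -- step C : the subtracted sum
  have hC : (∑ d ∈ Finset.range (β+1), entE R₂ d β * sigmaC N R₂ d γ) =
      (∑ e ∈ Finset.range (N-1),
        (∑ d ∈ Finset.range (N-1), entE U e d * entE R₂ d β) * sigmaC N R₁ e γ)
      - ∑ e ∈ Finset.range (N-1), entE U e (β+1) * sigmaC N R₁ e γ := by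
    have h1 : ∀ d ∈ Finset.range (β+1), entE R₂ d β * sigmaC N R₂ d γ =
        ∑ a ∈ Finset.range (N-1), entE R₂ d β * (entE U a d * sigmaC N R₁ a γ) := by
      intro d hd
      rw [Finset.mem_range] at hd
      rw [hE d (by omega) γ, Finset.mul_sum]
    rw [Finset.sum_congr rfl h1]
    have h2 : ∀ d, (∑ a ∈ Finset.range (N-1), entE R₂ d β * (entE U a d * sigmaC N R₁ a γ))
        = entE R₂ d β * ∑ a ∈ Finset.range (N-1), entE U a d * sigmaC N R₁ a γ := by
      intro d
      rw [Finset.mul_sum]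
    -- extend the range over d
    have hext : (∑ d ∈ Finset.range (N-1),
        ∑ a ∈ Finset.range (N-1), entE R₂ d β * (entE U a d * sigmaC N R₁ a γ)) =
        (∑ d ∈ Finset.range (β+1),
          ∑ a ∈ Finset.range (N-1), entE R₂ d β * (entE U a d * sigmaC N R₁ a γ))
        + ∑ a ∈ Finset.range (N-1), entE U a (β+1) * sigmaC N R₁ a γ := by
      rw [Finset.range_eq_Ico,
        ← Finset.sum_Ico_consecutive _ (by omega : 0 ≤ β+1) (by omega : β+1 ≤ N-1),
        ← Finset.range_eq_Ico]
      congr 1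
      by_cases hb : β + 1 < N - 1
      · rw [Finset.sum_eq_single_of_mem (β+1) (by rw [Finset.mem_Ico]; omega)]
        · rw [conn_entE_subdiag h₂ hb]
          refine Finset.sum_congr rfl fun a _ => ?_
          rw [one_mul]
        · intro d hd hne
          rw [Finset.mem_Ico] at hd
          rw [Finset.sum_eq_zero]
          intro a _
          rw [conn_entE_zero h₂ hNk (by omega), zero_mul]
      · have hIco : Finset.Ico (β+1) (N-1) = ∅ := by
          rw [Finset.Ico_eq_empty_iff]
          omega
        rw [hIco, Finset.sum_empty, Finset.sum_eq_zero]
        · intro a _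
          rw [entE_zero_right U (by omega), zero_mul]
    have hgoal : (∑ d ∈ Finset.range (β+1),
        ∑ a ∈ Finset.range (N-1), entE R₂ d β * (entE U a d * sigmaC N R₁ a γ)) =
        (∑ d ∈ Finset.range (N-1),
          ∑ a ∈ Finset.range (N-1), entE R₂ d β * (entE U a d * sigmaC N R₁ a γ))
        - ∑ a ∈ Finset.range (N-1), entE U a (β+1) * sigmaC N R₁ a γ := by
      rw [hext]; ring
    rw [hgoal]
    congr 1
    rw [Finset.sum_comm]
    refine Finset.sum_congr rfl fun e _ => ?_
    rw [Finset.sum_mul]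
    refine Finset.sum_congr rfl fun d _ => ?_
    ring
  -- assemble
  rw [sig_rec R₂ hβ γ, hAB, hC]
  have hrhs : ∀ e ∈ Finset.range (N-1),
      (X 0 * X 1 * pderiv 0 (entE U e β)
          + (∑ a ∈ Finset.range (N-1), entE R₁ e a * entE U a β)
          - (∑ d ∈ Finset.range (N-1), entE U e d * entE R₂ d β)
          + entE U e (β+1)) * sigmaC N R₁ e γ =
      (X 0 * X 1 * pderiv 0 (entE U e β)) * sigmaC N R₁ e γ
        + (∑ a ∈ Finset.range (N-1), entE R₁ e a * entE U a β) * sigmaC N R₁ e γ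
        - (∑ d ∈ Finset.range (N-1), entE U e d * entE R₂ d β) * sigmaC N R₁ e γ
        + entE U e (β+1) * sigmaC N R₁ e γ := by
    intro e _
    ring
  rw [Finset.sum_congr rfl hrhs]
  rw [Finset.sum_add_distrib, Finset.sum_sub_distrib, Finset.sum_add_distrib]
  ring
lemma sum_split_tri {N : ℕ} (R : Mat N) (f : ℕ → PQH) {γ : ℕ} (hγ : γ < N - 1) :
    ∑ a ∈ Finset.range (N-1), f a * sigmaC N R a γ =
      f γ + ∑ a ∈ Finset.Ico (γ+1) (N-1), f a * sigmaC N R a γ := by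
  rw [Finset.range_eq_Ico,
    ← Finset.sum_Ico_consecutive _ (by omega : 0 ≤ γ+1) (by omega : γ+1 ≤ N-1),
    ← Finset.range_eq_Ico]
  congr 1
  rw [Finset.sum_eq_single_of_mem γ (Finset.mem_range.mpr (by omega))]
  · rw [sigmaC_diag, mul_one]
  · intro a ha hne
    rw [Finset.mem_range] at ha
    rw [sigmaC_zero_lt (by omega), mul_zero]

lemma indep_tri {N : ℕ} (R : Mat N) (c : ℕ → PQH)
    (h : ∀ γ, (∑ e ∈ Finset.range (N-1), c e * sigmaC N R e γ) = 0) :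
    ∀ e, e < N - 1 → c e = 0 := by
  suffices H : ∀ m : ℕ, ∀ e, N - 1 ≤ e + m → e < N - 1 → c e = 0 by
    intro e he
    exact H (N-1) e (by omega) he
  intro m
  induction m with
  | zero => intro e h1 h2; omega
  | succ m ih =>
    intro e h1 h2
    have hsplit := sum_split_tri R c h2
    rw [h e] at hsplit
    have hz : ∀ a ∈ Finset.Ico (e+1) (N-1), c a * sigmaC N R a e = 0 := by
      intro a ha
      rw [Finset.mem_Ico] at ha
      rw [ih a (by omega) (by omega), zero_mul]
    rw [Finset.sum_eq_zero hz] at hsplit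
    rw [add_zero] at hsplit
    exact hsplit.symm
lemma mul_entry_range {N : ℕ} (A B : Mat N) (i j : Fin (N-1)) :
    (A * B) i j = ∑ a ∈ Finset.range (N-1), entE A (i:ℕ) a * entE B a (j:ℕ) := by
  rw [Matrix.mul_apply, ← Fin.sum_univ_eq_sum_range (fun a => entE A (i:ℕ) a * entE B a (j:ℕ))]
  refine Finset.sum_congr rfl fun x _ => ?_
  rw [entE_eq A i.isLt x.isLt, entE_eq B x.isLt j.isLt]

/-- the entrywise form of the gauge identity `R₁ U + q h ∂U = U R₂`. -/
lemma gauge_id_iff {N : ℕ} (U R₁ R₂ : Mat N) :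
    (R₁ * U + (X 1 * X 0 : PQH) • U.map (fun p => pderiv 0 p) = U * R₂) ↔
    (∀ e β : ℕ, e < N - 1 → β < N - 1 →
      X 0 * X 1 * pderiv 0 (entE U e β)
        + (∑ a ∈ Finset.range (N-1), entE R₁ e a * entE U a β)
        - (∑ d ∈ Finset.range (N-1), entE U e d * entE R₂ d β) = 0) := by
  constructor
  · intro hmat e β he hβ
    have hent := congrFun (congrFun hmat ⟨e, he⟩) ⟨β, hβ⟩
    rw [Matrix.add_apply, Matrix.smul_apply, Matrix.map_apply, smul_eq_mul,
      mul_entry_range, mul_entry_range] at hent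
    rw [entE_eq U he hβ]
    linear_combination hent
  · intro hent
    refine Matrix.ext fun i j => ?_
    have h := hent i j i.isLt j.isLt
    rw [Matrix.add_apply, Matrix.smul_apply, Matrix.map_apply, smul_eq_mul,
      mul_entry_range, mul_entry_range]
    rw [entE_eq U i.isLt j.isLt] at h
    linear_combination h

lemma gauge_tri {N k : ℕ} (hNk : k < N) {U : Mat N} (hU : IsAdaptedGauge N k U)
    {i j : Fin (N-1)} (hij : (j:ℕ) < (i:ℕ)) : U i j = 0 := by
  refine IsHom.eq_zero_of_neg hNk (hU.homog i j) ?_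
  have : ((j:ℤ)) < (i:ℤ) := by exact_mod_cast hij
  omega

lemma gauge_diag {N k : ℕ} (hNk : k < N) {U : Mat N} (hU : IsAdaptedGauge N k U)
    (i : Fin (N-1)) : U i i = 1 := by
  obtain ⟨c, hc⟩ := IsHom.exists_C hNk (by simpa using hU.homog i i)
  have hq := congrFun (congrFun hU.init i) i
  rw [Matrix.map_apply, Matrix.one_apply_eq, hc, q0_C] at hq
  rw [hc, hq]

lemma gauge_det {N k : ℕ} (hNk : k < N) {U : Mat N} (hU : IsAdaptedGauge N k U) :
    U.det = 1 := by
  have htri : U.BlockTriangular id := by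
    intro i j hij
    exact gauge_tri hNk hU hij
  rw [Matrix.det_of_upperTriangular htri]
  refine Finset.prod_eq_one fun i _ => gauge_diag hNk hU i
lemma sigma_row_zero {N : ℕ} (R₁ R₂ : Mat N) (γ : ℕ) :
    sigmaC N R₂ 0 γ = sigmaC N R₁ 0 γ := by
  cases γ with
  | zero => rw [sigmaC, sigmaC]
  | succ γ' => rw [sigmaC, sigmaC]

lemma backward_Ecol {N k : ℕ} (hk : 2 ≤ k) (hNk : k < N) {R₁ R₂ U : Mat N}
    (h₁ : IsAdaptedConn N k R₁) (h₂ : IsAdaptedConn N k R₂)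
    (hU : IsAdaptedGauge N k U)
    (hGG : ∀ e β : ℕ, e < N - 1 → β < N - 1 →
      X 0 * X 1 * pderiv 0 (entE U e β)
        + (∑ a ∈ Finset.range (N-1), entE R₁ e a * entE U a β)
        - (∑ d ∈ Finset.range (N-1), entE U e d * entE R₂ d β) = 0) :
    ∀ β : ℕ, β < N - 1 → ∀ γ : ℕ, sigmaC N R₂ β γ =
      ∑ a ∈ Finset.range (N-1), entE U a β * sigmaC N R₁ a γ := by
  have hN2 : 1 ≤ N - 1 := by omega
  intro β
  induction β using Nat.strong_induction_on with
  | _ β ih =>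
    match β with
    | 0 =>
      intro hβ γ
      rw [Finset.sum_eq_single_of_mem 0 (Finset.mem_range.mpr hβ)]
      · rw [entE_eq U hβ hβ, gauge_diag hNk hU, one_mul, sigma_row_zero]
      · intro a ha hne
        rw [Finset.mem_range] at ha
        rw [entE_eq U ha hβ, gauge_tri hNk hU (by simpa using Nat.pos_of_ne_zero hne),
          zero_mul]
    | β + 1 =>
      intro hβ γ
      have hβ' : β < N - 1 := by omega
      have hkey := key2 h₁ h₂ hNk hN2 U hβ'
        (fun δ hδ γ' => ih δ (by omega) (by omega) γ') γ
      rw [hkey]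
      have hzero : entE U (N-2) β = 0 := by
        rw [entE_eq U (by omega) hβ']
        exact gauge_tri hNk hU (by simp; omega)
      rw [hzero, zero_mul, add_zero]
      refine Finset.sum_congr rfl fun e he => ?_
      rw [Finset.mem_range] at he
      have := hGG e β he hβ'
      congr 1
      linear_combination this
  
lemma backward_main {N k : ℕ} (hk : 2 ≤ k) (hNk : k < N) {R₁ R₂ U : Mat N}
    (h₁ : IsAdaptedConn N k R₁) (h₂ : IsAdaptedConn N k R₂)
    (hU : IsAdaptedGauge N k U) (hact : gaugeAct N U R₁ = R₂) :
    Pops N R₁ (N-1) = Pops N R₂ (N-1) := by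
  have hN2 : 1 ≤ N - 1 := by omega
  have hdet : IsUnit U.det := by
    rw [gauge_det hNk hU]
    exact isUnit_one
  have hmat : R₁ * U + (X 1 * X 0 : PQH) • U.map (fun p => pderiv 0 p) = U * R₂ := by
    rw [← hact]
    unfold gaugeAct
    rw [Matrix.mul_add, Matrix.mul_smul]
    congr 1
    · rw [← Matrix.mul_assoc, ← Matrix.mul_assoc, Matrix.mul_nonsing_inv U hdet,
        Matrix.one_mul]
    · rw [← Matrix.mul_assoc, Matrix.mul_nonsing_inv U hdet, Matrix.one_mul]
  have hGG := (gauge_id_iff U R₁ R₂).mp hmat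
  have hEcol := backward_Ecol hk hNk h₁ h₂ hU hGG
  -- top row
  have htop : ∀ γ : ℕ, sigmaC N R₂ (N-1) γ = sigmaC N R₁ (N-1) γ := by
    intro γ
    have hβ' : N - 2 < N - 1 := by omega
    have hkey := key2 h₁ h₂ hNk hN2 U hβ'
      (fun δ hδ γ' => hEcol δ (by omega) γ') γ
    rw [show N - 2 + 1 = N - 1 by omega] at hkey
    rw [hkey]
    have hdiag : entE U (N-2) (N-2) = 1 := by
      rw [entE_eq U hβ' hβ']
      exact gauge_diag hNk hU _
    rw [hdiag, one_mul, Finset.sum_eq_zero, zero_add]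
    intro e he
    rw [Finset.mem_range] at he
    have h0 := hGG e (N-2) he hβ'
    have h1 : entE U e (N-2+1) = 0 := entE_zero_right U (by omega)
    rw [show N - 2 + 1 = N - 1 by omega] at h1
    have : (X 0 * X 1 * pderiv 0 (entE U e (N-2))
        + (∑ a ∈ Finset.range (N-1), entE R₁ e a * entE U a (N-2))
        - (∑ d ∈ Finset.range (N-1), entE U e d * entE R₂ d (N-2))
        + entE U e (N-1)) = 0 := by
      rw [h1, add_zero, h0]
    rw [this, zero_mul]
  rw [pops_eq R₁ (N-1) le_rfl, pops_eq R₂ (N-1) le_rfl]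
  exact Finset.sum_congr rfl fun γ _ => by rw [htop γ]
/-- the transpose of the matrix of `σ`'s. -/
def sigMat (N : ℕ) (R : Mat N) : Mat N := fun i j => sigmaC N R (j:ℕ) (i:ℕ)

lemma sigMat_det {N : ℕ} (R : Mat N) : (sigMat N R).det = 1 := by
  have htri : (sigMat N R).BlockTriangular id := by
    intro i j hij
    exact sigmaC_zero_lt (by exact_mod_cast hij)
  rw [Matrix.det_of_upperTriangular htri]
  refine Finset.prod_eq_one fun i _ => sigmaC_diag _

lemma forward_Ecol {N : ℕ} (R₁ R₂ : Mat N) (hN2 : 1 ≤ N - 1)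
    {U : Mat N} (hS : sigMat N R₁ * U = sigMat N R₂) :
    ∀ β : ℕ, β < N - 1 → ∀ γ : ℕ, sigmaC N R₂ β γ =
      ∑ a ∈ Finset.range (N-1), entE U a β * sigmaC N R₁ a γ := by
  intro β hβ γ
  by_cases hγ : γ < N - 1
  · have h := congrFun (congrFun hS ⟨γ, hγ⟩) ⟨β, hβ⟩
    rw [mul_entry_range] at h
    have h2 : (sigMat N R₂) ⟨γ, hγ⟩ ⟨β, hβ⟩ = sigmaC N R₂ β γ := rfl
    rw [h2] at h
    rw [← h]
    refine Finset.sum_congr rfl fun a ha => ?_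
    rw [Finset.mem_range] at ha
    rw [entE_eq (sigMat N R₁) hγ ha]
    have h3 : (sigMat N R₁) ⟨γ, hγ⟩ ⟨a, ha⟩ = sigmaC N R₁ a γ := rfl
    rw [h3, mul_comm]
  · rw [sigmaC_zero_lt (by omega), Finset.sum_eq_zero]
    intro a ha
    rw [Finset.mem_range] at ha
    rw [sigmaC_zero_lt (by omega), mul_zero]

lemma forward_formula {N : ℕ} (R₁ R₂ : Mat N) {U : Mat N}
    (hEcol : ∀ β : ℕ, β < N - 1 → ∀ γ : ℕ, sigmaC N R₂ β γ =
      ∑ a ∈ Finset.range (N-1), entE U a β * sigmaC N R₁ a γ)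
    {β γ : ℕ} (hβ : β < N - 1) (hγ : γ < N - 1) :
    entE U γ β = sigmaC N R₂ β γ -
      ∑ a ∈ Finset.Ico (γ+1) (N-1), entE U a β * sigmaC N R₁ a γ := by
  have h := hEcol β hβ γ
  rw [sum_split_tri R₁ (fun a => entE U a β) hγ] at h
  linear_combination -h

/-- all the downward-induction facts about the constructed gauge matrix. -/
lemma forward_down {N k : ℕ} {R₁ R₂ : Mat N} (hNk : k < N)
    (h₁ : IsAdaptedConn N k R₁) (h₂ : IsAdaptedConn N k R₂) {U : Mat N}
    (hEcol : ∀ β : ℕ, β < N - 1 → ∀ γ : ℕ, sigmaC N R₂ β γ =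
      ∑ a ∈ Finset.range (N-1), entE U a β * sigmaC N R₁ a γ) :
    ∀ m γ : ℕ, N - 1 ≤ γ + m →
      (∀ β, β < N - 1 → β < γ → entE U γ β = 0) ∧
      (γ < N - 1 → entE U γ γ = 1) ∧
      (∀ β, β < N - 1 → IsHom N k (entE U γ β) (2*(β:ℤ) - 2*(γ:ℤ))) ∧
      (∀ β, β < N - 1 → q0 (entE U γ β) = if γ = β then 1 else 0) := by
  intro m
  induction m with
  | zero =>
    intro γ hγ
    have hz : ∀ b, entE U γ b = 0 := fun b => entE_zero_left U (by omega)
    refine ⟨fun β _ _ => hz β, fun h => absurd h (by omega), ?_, ?_⟩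
    · intro β _
      rw [hz β]
      exact isWeightedHomogeneous_zero ℂ _ _
    · intro β hβ
      rw [hz β, map_zero, if_neg (by omega)]
  | succ m ih =>
    intro γ hγ
    by_cases hγ' : γ < N - 1
    · have ihgt : ∀ a, γ < a →
          (∀ β, β < N - 1 → β < a → entE U a β = 0) ∧
          (a < N - 1 → entE U a a = 1) ∧
          (∀ β, β < N - 1 → IsHom N k (entE U a β) (2*(β:ℤ) - 2*(a:ℤ))) ∧
          (∀ β, β < N - 1 → q0 (entE U a β) = if a = β then 1 else 0) :=
        fun a ha => ih a (by omega)
      refine ⟨?_, ?_, ?_, ?_⟩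
      · intro β hβ hβγ
        rw [forward_formula R₁ R₂ hEcol hβ hγ', sigmaC_zero_lt hβγ,
          Finset.sum_eq_zero, sub_zero]
        intro a ha
        rw [Finset.mem_Ico] at ha
        rw [(ihgt a (by omega)).1 β hβ (by omega), zero_mul]
      · intro _
        rw [forward_formula R₁ R₂ hEcol hγ' hγ', sigmaC_diag,
          Finset.sum_eq_zero, sub_zero]
        intro a ha
        rw [Finset.mem_Ico] at ha
        rw [(ihgt a (by omega)).1 γ hγ' (by omega), zero_mul]
      · intro β hβ
        rw [forward_formula R₁ R₂ hEcol hβ hγ']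
        refine IsHom.sub (isHom_sigmaC h₂.homog β γ) ?_
        refine IsWeightedHomogeneous.sum _ _ _ fun a ha => ?_
        rw [Finset.mem_Ico] at ha
        refine IsHom.cast
          (((ihgt a (by omega)).2.2.1 β hβ).mul (isHom_sigmaC h₁.homog a γ)) ?_
        ring
      · intro β hβ
        rw [forward_formula R₁ R₂ hEcol hβ hγ', map_sub, map_sum,
          q0_sigmaC h₂.init β γ]
        have hsz : ∀ a ∈ Finset.Ico (γ+1) (N-1),
            q0 (entE U a β * sigmaC N R₁ a γ) = 0 := by
          intro a ha
          rw [Finset.mem_Ico] at ha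
          rw [_root_.map_mul, q0_sigmaC h₁.init a γ, if_neg (by omega), mul_zero]
        rw [Finset.sum_eq_zero hsz, sub_zero]
        by_cases hbg : β = γ
        · rw [if_pos hbg, if_pos hbg.symm]
        · rw [if_neg hbg, if_neg (fun hh => hbg hh.symm)]
    · have hz : ∀ b, entE U γ b = 0 := fun b => entE_zero_left U (by omega)
      refine ⟨fun β _ _ => hz β, fun h => absurd h hγ', ?_, ?_⟩
      · intro β _
        rw [hz β]
        exact isWeightedHomogeneous_zero ℂ _ _
      · intro β hβ
        rw [hz β, map_zero, if_neg (by omega)]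
lemma forward_main {N k : ℕ} (hk : 2 ≤ k) (hNk : k < N) {R₁ R₂ : Mat N}
    (h₁ : IsAdaptedConn N k R₁) (h₂ : IsAdaptedConn N k R₂)
    (hP : Pops N R₁ (N-1) = Pops N R₂ (N-1)) :
    ∃ U : Mat N, IsAdaptedGauge N k U ∧ gaugeAct N U R₁ = R₂ := by
  have hN2 : 1 ≤ N - 1 := by omega
  have htop := sigma_top_eq R₁ R₂ hP
  set U : Mat N := (sigMat N R₁)⁻¹ * sigMat N R₂ with hUdef
  have hdet1 : IsUnit (sigMat N R₁).det := by
    rw [sigMat_det]; exact isUnit_one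
  have hS : sigMat N R₁ * U = sigMat N R₂ := by
    rw [hUdef, ← Matrix.mul_assoc, Matrix.mul_nonsing_inv _ hdet1, Matrix.one_mul]
  have hEcol := forward_Ecol R₁ R₂ hN2 hS
  have hdown := forward_down hNk h₁ h₂ hEcol
  have hvan : ∀ γ β : ℕ, β < N-1 → β < γ → entE U γ β = 0 :=
    fun γ β hb hg => (hdown (N-1) γ (by omega)).1 β hb hg
  have hdiag : ∀ γ : ℕ, γ < N-1 → entE U γ γ = 1 :=
    fun γ h => (hdown (N-1) γ (by omega)).2.1 h
  have hhom : ∀ γ β : ℕ, β < N-1 → IsHom N k (entE U γ β) (2*(β:ℤ) - 2*(γ:ℤ)) :=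
    fun γ β h => (hdown (N-1) γ (by omega)).2.2.1 β h
  have hq0 : ∀ γ β : ℕ, β < N-1 → q0 (entE U γ β) = if γ = β then 1 else 0 :=
    fun γ β h => (hdown (N-1) γ (by omega)).2.2.2 β h
  have hGauge : IsAdaptedGauge N k U := by
    constructor
    · intro i j
      have h := hhom (i:ℕ) (j:ℕ) j.isLt
      rw [entE_fin] at h
      exact IsHom.cast h (by ring)
    · refine Matrix.ext fun i j => ?_
      rw [Matrix.map_apply, show U i j = entE U (i:ℕ) (j:ℕ) from (entE_fin U i j).symm,
        hq0 (i:ℕ) (j:ℕ) j.isLt, Matrix.one_apply]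
      by_cases hij : (i:ℕ) = (j:ℕ)
      · rw [if_pos hij, if_pos (Fin.ext hij)]
      · rw [if_neg hij, if_neg (fun hh => hij (congrArg Fin.val hh))]
  have hdetU : IsUnit U.det := by
    rw [gauge_det hNk hGauge]; exact isUnit_one
  have hcol : ∀ β : ℕ, β < N - 1 → ∀ γ : ℕ,
      (∑ e ∈ Finset.range (N-1),
        (X 0 * X 1 * pderiv 0 (entE U e β)
          + (∑ a ∈ Finset.range (N-1), entE R₁ e a * entE U a β)
          - (∑ d ∈ Finset.range (N-1), entE U e d * entE R₂ d β)) * sigmaC N R₁ e γ) = 0 := by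
    intro β hβ γ
    have hkey := key2 h₁ h₂ hNk hN2 U hβ (fun δ hδ γ' => hEcol δ (by omega) γ') γ
    by_cases hb : β + 1 < N - 1
    · have hE2 := hEcol (β+1) hb γ
      have hvanb : entE U (N-2) β = 0 := hvan (N-2) β hβ (by omega)
      rw [hvanb, zero_mul, add_zero] at hkey
      have hsplitsum : (∑ e ∈ Finset.range (N-1),
          (X 0 * X 1 * pderiv 0 (entE U e β)
            + (∑ a ∈ Finset.range (N-1), entE R₁ e a * entE U a β)
            - (∑ d ∈ Finset.range (N-1), entE U e d * entE R₂ d β)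
            + entE U e (β+1)) * sigmaC N R₁ e γ) =
          (∑ e ∈ Finset.range (N-1),
            (X 0 * X 1 * pderiv 0 (entE U e β)
              + (∑ a ∈ Finset.range (N-1), entE R₁ e a * entE U a β)
              - (∑ d ∈ Finset.range (N-1), entE U e d * entE R₂ d β)) * sigmaC N R₁ e γ)
          + ∑ e ∈ Finset.range (N-1), entE U e (β+1) * sigmaC N R₁ e γ := by
        rw [← Finset.sum_add_distrib]
        refine Finset.sum_congr rfl fun e _ => ?_
        ring
      linear_combination -hkey + hE2 - hsplitsum
    · have hb2 : β + 1 = N - 1 := by omega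
      have hdiagb : entE U (N-2) β = 1 := by
        rw [show N - 2 = β by omega]
        exact hdiag β hβ
      have hz : ∀ e ∈ Finset.range (N-1),
          (X 0 * X 1 * pderiv 0 (entE U e β)
            + (∑ a ∈ Finset.range (N-1), entE R₁ e a * entE U a β)
            - (∑ d ∈ Finset.range (N-1), entE U e d * entE R₂ d β)
            + entE U e (β+1)) * sigmaC N R₁ e γ =
          (X 0 * X 1 * pderiv 0 (entE U e β)
            + (∑ a ∈ Finset.range (N-1), entE R₁ e a * entE U a β)
            - (∑ d ∈ Finset.range (N-1), entE U e d * entE R₂ d β)) * sigmaC N R₁ e γ := by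
        intro e _
        rw [show entE U e (β+1) = 0 from entE_zero_right U (by omega), add_zero]
      rw [Finset.sum_congr rfl hz, hdiagb, one_mul] at hkey
      have htop' : sigmaC N R₂ (β+1) γ = sigmaC N R₁ (N-1) γ := by
        rw [hb2]
        exact (htop γ).symm
      linear_combination htop' - hkey
  have hGG : ∀ e β : ℕ, e < N - 1 → β < N - 1 →
      X 0 * X 1 * pderiv 0 (entE U e β)
        + (∑ a ∈ Finset.range (N-1), entE R₁ e a * entE U a β)
        - (∑ d ∈ Finset.range (N-1), entE U e d * entE R₂ d β) = 0 := by
    intro e β he hβ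
    exact indep_tri R₁ _ (hcol β hβ) e he
  have hmat := (gauge_id_iff U R₁ R₂).mpr hGG
  refine ⟨U, hGauge, ?_⟩
  unfold gaugeAct
  have h1 : U⁻¹ * R₁ * U + (X 1 * X 0 : PQH) • (U⁻¹ * U.map (fun p => pderiv 0 p)) =
      U⁻¹ * (R₁ * U + (X 1 * X 0 : PQH) • U.map (fun p => pderiv 0 p)) := by
    rw [Matrix.mul_add, Matrix.mul_smul, Matrix.mul_assoc]
  rw [h1, hmat, ← Matrix.mul_assoc, Matrix.nonsing_inv_mul U hdetU, Matrix.one_mul]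

/-- **Theorem (Equivalence, thm:equivalence).** Two adapted families of connection
1-forms have the same reduced operator if and only if they are adapted gauge
equivalent. -/
theorem same_reduced_operator_iff_gauge_equivalent
    (N k : ℕ) (hk : 2 ≤ k) (hNk : k < N)
    (R₁ R₂ : Mat N)
    (h₁ : IsAdaptedConn N k R₁) (h₂ : IsAdaptedConn N k R₂) :
    Pops N R₁ (N - 1) = Pops N R₂ (N - 1) ↔
      ∃ U : Mat N, IsAdaptedGauge N k U ∧ gaugeAct N U R₁ = R₂ := by
  constructor
  · intro hP
    exact forward_main hk hNk h₁ h₂ hP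
  · rintro ⟨U, hU, hact⟩
    exact backward_main hk hNk h₁ h₂ hU hact

end
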